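/- arXiv:1611.01200 — 2 statements merged into one kernel-verified Lean document; each statement's English description precedes it below -/
import Mathlib

section
/- Every proper surjective homomorphic image of a subcomplete digraph is a partial subcomplete digraph; in particular the family {N⃗_{2k,k} : k ≥ 1} of proper subcomplete digraphs is an infinite antichain under both the standard and strong surjective homomorphism orderings. -/
/-- A finite structure with a single binary relation (digraph/graph model). -/
structure FinBinRel where
  n : ℕ
  rel : Fin n → Fin n → Prop

/-- `f` is a homomorphism from `A` to `B`: it maps related pairs to related pairs. -/
def IsHom (A B : FinBinRel) (f : Fin A.n → Fin B.n) : Prop :=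
  ∀ x y, A.rel x y → B.rel (f x) (f y)

/-- `f` is a strong homomorphism: a homomorphism such that every related pair of
elements of the image is the image of a related pair. -/
def IsStrongHom (A B : FinBinRel) (f : Fin A.n → Fin B.n) : Prop :=
  IsHom A B f ∧
    ∀ p q : Fin B.n, B.rel p q → (∃ a, f a = p) → (∃ b, f b = q) →
      ∃ u v, A.rel u v ∧ f u = p ∧ f v = q

/-- Homomorphic image ordering: `A ⪯ B` iff there is a surjective homomorphism `B → A`. -/
def HomLe (A B : FinBinRel) : Prop :=
  ∃ f : Fin B.n → Fin A.n, Function.Surjective f ∧ IsHom B A f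

/-- Strong homomorphic image ordering: `A ⪯ B` iff there is a surjective strong
homomorphism `B → A`. -/
def StrongLe (A B : FinBinRel) : Prop :=
  ∃ f : Fin B.n → Fin A.n, Function.Surjective f ∧ IsStrongHom B A f

/-- Isomorphism of binary relational structures. -/
def BinIso (A B : FinBinRel) : Prop :=
  ∃ e : Fin A.n ≃ Fin B.n, ∀ x y, A.rel x y ↔ B.rel (e x) (e y)

/-- A class `C` is well quasi-ordered by `r`: every infinite sequence of members of `C`
contains a "good pair". (For orderings on finite structures respecting size this is
equivalent to having no infinite antichain.) -/
def IsWqo (r : FinBinRel → FinBinRel → Prop) (C : Set FinBinRel) : Prop :=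
  ∀ f : ℕ → FinBinRel, (∀ i, f i ∈ C) → ∃ i j, i < j ∧ r (f i) (f j)

/-- A reflexive graph: symmetric relation with a loop at every vertex. -/
def ReflGraph (A : FinBinRel) : Prop :=
  (∀ x, A.rel x x) ∧ (∀ x y, A.rel x y → A.rel y x)

/-- An irreflexive graph: symmetric and loopless. -/
def IrrGraph (A : FinBinRel) : Prop :=
  (∀ x, ¬ A.rel x x) ∧ (∀ x y, A.rel x y → A.rel y x)

/-- The irreflexive complete graph on `n` vertices. -/
def Kirr (n : ℕ) : FinBinRel := ⟨n, fun i j => i ≠ j⟩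

/-- The complete reflexive graph/digraph on `n` vertices (all pairs, including loops). -/
def Kcompl (n : ℕ) : FinBinRel := ⟨n, fun _ _ => True⟩

/-- The subcomplete reflexive graph `N_{n,k}` (for `2k ≤ n`): the complete reflexive
graph on `n` vertices with the `k` disjoint edges `{0,1},{2,3},…,{2k-2,2k-1}` deleted. -/
def Ngraph (n k : ℕ) : FinBinRel :=
  ⟨n, fun i j => ¬ ∃ m, m < k ∧
      ((i.val = 2 * m ∧ j.val = 2 * m + 1) ∨ (j.val = 2 * m ∧ i.val = 2 * m + 1))⟩

/-- The subcomplete digraph `N⃗_{n,k}` (for `2k ≤ n`): the complete reflexive digraph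
on `n` vertices with the `k` disjoint directed edges `(0,1),(2,3),…,(2k-2,2k-1)` removed. -/
def Ndigraph (n k : ℕ) : FinBinRel :=
  ⟨n, fun i j => ¬ ∃ m, m < k ∧ i.val = 2 * m ∧ j.val = 2 * m + 1⟩

/-- `D` has a set of `k` pairwise disjoint edges (all `2k` endpoints distinct). -/
def HasDisjointEdges (D : FinBinRel) (k : ℕ) : Prop :=
  ∃ a b : Fin k → Fin D.n,
    Function.Injective (Sum.elim a b) ∧ ∀ i, D.rel (a i) (b i)

/-!
A homomorphism `f` from `N⃗_{n,k}` maps edges to edges, so every preimage of a non-edge `(p, q)`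
of the image is a non-edge `(2m, 2m + 1)` of `N⃗_{n,k}`. Hence `p` and `q` have singleton fibres
and the non-edges of a surjective image form a matching; relabelling the matched vertices as
`0, 1, …` makes the image a subcomplete digraph. If `f` is not injective, a vertex with a larger
fibre lies on no non-edge, so the image is partial. A proper `N⃗_{2k,k}` has no vertex outside all
non-edges, hence is not isomorphic to a partial one; and a surjection `N⃗_{2l,l} → N⃗_{2k,k}` with
`k ≠ l` forces `k < l`, so it is not injective.
-/

open Function

namespace Ndigraph

variable {n k : ℕ}

theorem not_rel_iff {i j : Fin n} :
    ¬ (Ndigraph n k).rel i j ↔ ∃ m < k, i.val = 2 * m ∧ j.val = 2 * m + 1 :=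
  not_not

theorem eq_of_not_rel_left {i j x : Fin n} (hx : ¬ (Ndigraph n k).rel x j)
    (hi : ¬ (Ndigraph n k).rel i j) : x = i := by
  obtain ⟨m, -, hxm, hjm⟩ := not_rel_iff.1 hx
  obtain ⟨m', -, him, hjm'⟩ := not_rel_iff.1 hi
  exact Fin.ext (by omega)

theorem eq_of_not_rel_right {i j y : Fin n} (hy : ¬ (Ndigraph n k).rel i y)
    (hj : ¬ (Ndigraph n k).rel i j) : y = j := by
  obtain ⟨m, -, him, hym⟩ := not_rel_iff.1 hy
  obtain ⟨m', -, him', hjm⟩ := not_rel_iff.1 hj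
  exact Fin.ext (by omega)

variable {H : FinBinRel} {f : Fin n → Fin H.n}

theorem eq_of_map_eq_left (hf : IsHom (Ndigraph n k) H f) {i j x : Fin n}
    (h : ¬ H.rel (f i) (f j)) (hx : f x = f i) : x = i :=
  eq_of_not_rel_left (fun hxj => h (hx ▸ hf x j hxj)) (fun hij => h (hf i j hij))

theorem eq_of_map_eq_right (hf : IsHom (Ndigraph n k) H f) {i j y : Fin n}
    (h : ¬ H.rel (f i) (f j)) (hy : f y = f j) : y = j :=
  eq_of_not_rel_right (fun hiy => h (hy ▸ hf i y hiy)) (fun hij => h (hf i j hij))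

end Ndigraph

theorem binIso_ndigraph_of_nonEdges {H : FinBinRel} {ι : Type*} [Fintype ι]
    (d : ι × Fin 2 → Fin H.n) (hd : Injective d)
    (hne : ∀ x y, ¬ H.rel x y ↔ ∃ i, d (i, 0) = x ∧ d (i, 1) = y) :
    BinIso H (Ndigraph H.n (Fintype.card ι)) := by
  classical
  set σ := Fintype.equivFin ι
  have hl : Fintype.card ι * 2 ≤ H.n := by simpa using Fintype.card_le_of_injective d hd
  let e : {x // x ∈ Set.range d} ≃ {x : Fin H.n // x.val < Fintype.card ι * 2} :=
    (Equiv.ofInjective d hd).symm.trans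
      ((σ.prodCongr (Equiv.refl _)).trans (finProdFinEquiv.trans (Fin.castLEquiv hl)))
  let E : Fin H.n ≃ Fin (Ndigraph H.n (Fintype.card ι)).n := e.extendSubtype
  have hE : ∀ i j, (E (d (i, j))).val = j + 2 * σ i := fun i j => by
    refine (congrArg Fin.val (e.extendSubtype_apply_of_mem (d (i, j)) ⟨_, rfl⟩)).trans ?_
    simp [e, Fin.castLEquiv, finProdFinEquiv]
  refine ⟨E, fun x y => not_iff_not.1 ((hne x y).trans ?_)⟩
  refine Iff.trans ?_ Ndigraph.not_rel_iff.symm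
  constructor
  · rintro ⟨i, rfl, rfl⟩
    exact ⟨σ i, (σ i).isLt, by rw [hE, Fin.val_zero, zero_add],
      by rw [hE, Fin.val_one, add_comm]⟩
  · rintro ⟨m, hm, hx, hy⟩
    refine ⟨σ.symm ⟨m, hm⟩, E.injective (Fin.ext ?_), E.injective (Fin.ext ?_)⟩
    · rw [hE, hx, Equiv.apply_symm_apply, Fin.val_zero, zero_add]
    · rw [hE, hy, Equiv.apply_symm_apply, Fin.val_one, add_comm]

theorem exists_binIso_ndigraph_of_surjective_hom {n k : ℕ} (hkn : 2 * k ≤ n) {H : FinBinRel}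
    {f : Fin n → Fin H.n} (hs : Surjective f) (hf : IsHom (Ndigraph n k) H f)
    (hni : ¬ Injective f) : ∃ m l, 2 * l < m ∧ BinIso H (Ndigraph m l) := by
  classical
  let v : Fin k × Fin 2 → Fin n := fun p => Fin.castLE (by omega) (finProdFinEquiv p)
  have hv_val : ∀ s j, (v (s, j)).val = j + 2 * s := fun _ _ => rfl
  have hv : Injective v := (Fin.castLE_injective _).comp finProdFinEquiv.injective
  let ι := {s : Fin k // ¬ H.rel (f (v (s, 0))) (f (v (s, 1)))}
  let d : ι × Fin 2 → Fin H.n := fun p => f (v (p.1, p.2))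
  have fiber : ∀ p x, f x = d p → x = v (p.1, p.2) := by
    rintro ⟨s, j⟩ x hx
    fin_cases j
    · exact Ndigraph.eq_of_map_eq_left hf s.2 hx
    · exact Ndigraph.eq_of_map_eq_right hf s.2 hx
  have hd : Injective d := fun p q h => by
    have := hv (fiber p _ h.symm)
    simp only [Prod.mk.injEq] at this
    exact Prod.ext (Subtype.ext this.1.symm) this.2.symm
  have hne : ∀ x y, ¬ H.rel x y ↔ ∃ s, d (s, 0) = x ∧ d (s, 1) = y := by
    refine fun x y => ⟨fun hxy => ?_, fun ⟨s, hx, hy⟩ => hx ▸ hy ▸ s.2⟩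
    obtain ⟨i, rfl⟩ := hs x
    obtain ⟨j, rfl⟩ := hs y
    obtain ⟨m, hm, hi, hj⟩ := Ndigraph.not_rel_iff.1 (mt (hf i j) hxy)
    have hvi : v (⟨m, hm⟩, 0) = i :=
      Fin.ext (by rw [hv_val, Fin.val_zero, zero_add]; exact hi.symm)
    have hvj : v (⟨m, hm⟩, 1) = j :=
      Fin.ext (by rw [hv_val, Fin.val_one, add_comm]; exact hj.symm)
    exact ⟨⟨⟨m, hm⟩, hvi ▸ hvj ▸ hxy⟩, congrArg f hvi, congrArg f hvj⟩
  obtain ⟨i₀, j₀, hij, hne₀⟩ := not_injective_iff.1 hni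
  have hlt : Fintype.card (ι × Fin 2) < Fintype.card (Fin H.n) :=
    Fintype.card_lt_of_injective_of_notMem d hd (b := f i₀) fun ⟨p, hp⟩ =>
      hne₀ ((fiber p i₀ hp.symm).trans (fiber p j₀ (hij ▸ hp.symm)).symm)
  refine ⟨H.n, Fintype.card ι, ?_, binIso_ndigraph_of_nonEdges d hd hne⟩
  simp only [Fintype.card_prod, Fintype.card_fin] at hlt
  omega

def IsUniversalVertex (A : FinBinRel) (x : Fin A.n) : Prop :=
  ∀ y, A.rel x y ∧ A.rel y x

theorem BinIso.exists_isUniversalVertex {A B : FinBinRel} (h : BinIso A B)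
    (hB : ∃ x, IsUniversalVertex B x) : ∃ x, IsUniversalVertex A x := by
  obtain ⟨e, he⟩ := h
  obtain ⟨x, hx⟩ := hB
  refine ⟨e.symm x, fun y => ?_⟩
  simpa [he] using hx (e y)

theorem Ndigraph.isUniversalVertex {m l : ℕ} (h : 2 * l < m) :
    IsUniversalVertex (Ndigraph m l) ⟨2 * l, h⟩ := by
  intro y
  constructor <;> rintro ⟨i, hi, h1, h2⟩ <;> simp only at h1 h2 <;> omega

theorem Ndigraph.not_isUniversalVertex (k : ℕ) (x : Fin (2 * k)) :
    ¬ IsUniversalVertex (Ndigraph (2 * k) k) x := by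
  intro hx
  rcases Nat.even_or_odd' x.val with ⟨m, hm | hm⟩
  · exact (hx (⟨2 * m + 1, by omega⟩ : Fin (2 * k))).1 ⟨m, by omega, hm, rfl⟩
  · exact (hx (⟨2 * m, by omega⟩ : Fin (2 * k))).2 ⟨m, by omega, rfl, hm⟩

theorem Ndigraph.not_binIso_of_lt {k m l : ℕ} (hml : 2 * l < m) :
    ¬ BinIso (Ndigraph (2 * k) k) (Ndigraph m l) := fun h => by
  obtain ⟨x, hx⟩ := h.exists_isUniversalVertex ⟨_, Ndigraph.isUniversalVertex hml⟩
  exact Ndigraph.not_isUniversalVertex k x hx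

theorem StrongLe.homLe {A B : FinBinRel} (h : StrongLe A B) : HomLe A B :=
  let ⟨f, hs, hf⟩ := h
  ⟨f, hs, hf.1⟩

theorem Ndigraph.not_homLe {k l : ℕ} (hkl : k ≠ l) :
    ¬ HomLe (Ndigraph (2 * k) k) (Ndigraph (2 * l) l) := by
  rintro ⟨f, hs, hf⟩
  have hle : 2 * k ≤ 2 * l := Fin.le_of_surjective f hs
  have hni : ¬ Injective f := fun hi => hkl <| by
    have : 2 * l ≤ 2 * k := Fin.le_of_injective f hi
    omega
  obtain ⟨m, l', hml, hiso⟩ := exists_binIso_ndigraph_of_surjective_hom le_rfl hs hf hni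
  exact Ndigraph.not_binIso_of_lt hml hiso

/-- Every proper surjective homomorphic image of a subcomplete digraph is (isomorphic to)
a partial subcomplete digraph; in particular the proper subcomplete digraphs
`{N⃗_{2k,k} : k ≥ 1}` form an infinite antichain under both the standard and strong
surjective homomorphism orderings. -/
theorem stmt_14 :
    (∀ n k : ℕ, 2 * k ≤ n → ∀ H : FinBinRel,
      ∀ f : Fin n → Fin H.n, Function.Surjective f → IsHom (Ndigraph n k) H f →
        ¬ Function.Injective f → ∃ m l, 2 * l < m ∧ BinIso H (Ndigraph m l)) ∧
    ({D | ∃ k, 1 ≤ k ∧ D = Ndigraph (2 * k) k} : Set FinBinRel).Infinite ∧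
    (∀ k l : ℕ, 1 ≤ k → 1 ≤ l → k ≠ l →
      ¬ HomLe (Ndigraph (2 * k) k) (Ndigraph (2 * l) l) ∧
      ¬ StrongLe (Ndigraph (2 * k) k) (Ndigraph (2 * l) l)) := by
  refine ⟨fun n k hkn H f hs hf hni => exists_binIso_ndigraph_of_surjective_hom hkn hs hf hni,
    ?_, fun k l _ _ hkl =>
      ⟨Ndigraph.not_homLe hkl, mt StrongLe.homLe (Ndigraph.not_homLe hkl)⟩⟩
  refine Set.infinite_of_injective_forall_mem (f := fun k => Ndigraph (2 * (k + 1)) (k + 1))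
    (fun k k' h => ?_) (fun k => ⟨k + 1, Nat.le_add_left 1 k, rfl⟩)
  have : 2 * (k + 1) = 2 * (k' + 1) := congrArg FinBinRel.n h
  omega
end

section
/- Any class of finite digraphs for which there is a uniform bound on the size of sets of pairwise disjoint partial pairs is well quasi-ordered under the surjective homomorphism ordering. -/
/-- `D` has a set of `k` pairwise disjoint partial pairs: pairs `a ≠ b` not connected
bidirectionally, with all `2k` vertices distinct. -/
def HasDisjointPartialPairs (D : FinBinRel) (k : ℕ) : Prop :=
  ∃ a b : Fin k → Fin D.n,
    Function.Injective (Sum.elim a b) ∧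
    ∀ i, ¬ (D.rel (a i) (b i) ∧ D.rel (b i) (a i))

open Function

theorem Set.PartiallyWellOrderedOn.biUnion {α ι : Type*} {r : α → α → Prop} {s : Finset ι}
    {t : ι → Set α} (h : ∀ i ∈ s, (t i).PartiallyWellOrderedOn r) :
    (⋃ i ∈ s, t i).PartiallyWellOrderedOn r := by
  classical
  induction s using Finset.induction_on with
  | empty => simp
  | insert a s _ ih =>
    rw [Finset.set_biUnion_insert]
    exact (h a (Finset.mem_insert_self a s)).union
      (ih fun i hi => h i (Finset.mem_insert_of_mem hi))

theorem exists_surjective_of_card_le {α β : Type*} [Finite α] [Finite β]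
    (hcard : Nat.card β ≤ Nat.card α) (hne : Nonempty α → Nonempty β) :
    ∃ f : α → β, Surjective f := by
  have := Fintype.ofFinite α
  have := Fintype.ofFinite β
  rw [exists_surjective_iff, nonempty_fun]
  refine ⟨(isEmpty_or_nonempty α).imp_right hne, Embedding.nonempty_of_card_le ?_⟩
  simpa only [Nat.card_eq_fintype_card] using hcard

theorem exists_fiberwise_surjective {X Y T : Type*} (f : X → T) (g : Y → T)
    (h : ∀ t, ∃ e : {x // f x = t} → {y // g y = t}, Surjective e) :
    ∃ φ : X → Y, Surjective φ ∧ ∀ x, g (φ x) = f x := by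
  choose e he using h
  refine ⟨fun x => (e (f x) ⟨x, rfl⟩).1, ?_, fun x => (e (f x) ⟨x, rfl⟩).2⟩
  suffices ∀ t (y : {y // g y = t}), ∃ x, (e (f x) ⟨x, rfl⟩).1 = y.1 from
    fun y => this (g y) ⟨y, rfl⟩
  intro t y
  obtain ⟨⟨x, rfl⟩, hxy⟩ := he t y
  exact ⟨x, congrArg Subtype.val hxy⟩

def IsCore {ι : Type*} (D : FinBinRel) (σ : ι → Fin D.n) : Prop :=
  ∀ v w, v ∉ Set.range σ → w ∉ Set.range σ → D.rel v w

theorem hasDisjointPartialPairs_succ {D : FinBinRel} {k : ℕ} {a b : Fin k → Fin D.n}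
    (hab : Injective (Sum.elim a b)) (hpart : ∀ i, ¬ (D.rel (a i) (b i) ∧ D.rel (b i) (a i)))
    {v w : Fin D.n} (hv : v ∉ Set.range (Sum.elim a b)) (hw : w ∉ Set.range (Sum.elim a b))
    (hvw : v ≠ w) (hpart_vw : ¬ (D.rel v w ∧ D.rel w v)) :
    HasDisjointPartialPairs D (k + 1) := by
  simp only [Set.mem_range, Sum.exists, Sum.elim_inl, Sum.elim_inr, not_or, not_exists] at hv hw
  rw [Sum.elim_injective] at hab
  refine ⟨Fin.cons v a, Fin.cons w b, ?_, Fin.cases hpart_vw hpart⟩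
  refine Sum.elim_injective.mpr ⟨Fin.cons_injective_of_injective ?_ hab.1,
    Fin.cons_injective_of_injective ?_ hab.2.1, fun i j => ?_⟩
  · simpa [Set.mem_range] using hv.1
  · simpa [Set.mem_range] using hw.2
  · cases i using Fin.cases <;> cases j using Fin.cases <;>
      simp [hvw, hab.2.2, Ne.symm (hv.2 _), hw.1 _]

theorem exists_isCore {D : FinBinRel} {N : ℕ} (hrefl : ∀ x, D.rel x x)
    (hbound : ∀ k, HasDisjointPartialPairs D k → k ≤ N) :
    ∃ k ≤ N, ∃ a b : Fin k → Fin D.n,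
      Injective (Sum.elim a b) ∧ IsCore D (Sum.elim a b) := by
  classical
  have h0 : HasDisjointPartialPairs D 0 :=
    ⟨Fin.elim0, Fin.elim0, injective_of_subsingleton _, fun i => i.elim0⟩
  set k := Nat.findGreatest (HasDisjointPartialPairs D) N
  obtain ⟨a, b, hab, hpart⟩ : HasDisjointPartialPairs D k :=
    Nat.findGreatest_spec (Nat.zero_le N) h0
  refine ⟨k, Nat.findGreatest_le N, a, b, hab, fun v w hv hw => ?_⟩
  by_contra hvw
  have hne : v ≠ w := by rintro rfl; exact hvw (hrefl v)
  have hsucc := hasDisjointPartialPairs_succ hab hpart hv hw hne fun h => hvw h.1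
  exact Nat.findGreatest_is_greatest (Nat.lt_succ_self k) (hbound _ hsucc) hsucc

abbrev CoreLabel (ι : Type*) : Type _ := ι ⊕ (ι → Prop × Prop)

section Labels

variable {ι : Type*} (D : FinBinRel) (σ : ι → Fin D.n)

def vertexType (v : Fin D.n) : ι → Prop × Prop :=
  fun s => (D.rel (σ s) v, D.rel v (σ s))

def coreRel : ι → ι → Prop :=
  fun s t => D.rel (σ s) (σ t)

open Classical in
noncomputable def label (v : Fin D.n) : CoreLabel ι :=
  if h : v ∈ Set.range σ then .inl h.choose else .inr (vertexType D σ v)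

variable {D σ}

theorem label_apply (hσ : Injective σ) (s : ι) : label D σ (σ s) = .inl s := by
  have h : σ s ∈ Set.range σ := ⟨s, rfl⟩
  rw [label, dif_pos h, hσ h.choose_spec]

theorem label_of_notMem_range {v : Fin D.n} (hv : v ∉ Set.range σ) :
    label D σ v = .inr (vertexType D σ v) := by
  rw [label, dif_neg hv]

end Labels

def labelRel {ι : Type*} (c : ι → ι → Prop) : CoreLabel ι → CoreLabel ι → Prop
  | .inl s, .inl t => c s t
  | .inl s, .inr τ => (τ s).1
  | .inr τ, .inl t => (τ t).2
  | .inr _, .inr _ => True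

theorem rel_iff_labelRel {ι : Type*} {D : FinBinRel} {σ : ι → Fin D.n} (hσ : Injective σ)
    (hcore : IsCore D σ) (x y : Fin D.n) :
    D.rel x y ↔ labelRel (coreRel D σ) (label D σ x) (label D σ y) := by
  by_cases hx : x ∈ Set.range σ <;> by_cases hy : y ∈ Set.range σ
  · obtain ⟨s, rfl⟩ := hx
    obtain ⟨t, rfl⟩ := hy
    simp only [label_apply hσ, labelRel, coreRel]
  · obtain ⟨s, rfl⟩ := hx
    simp only [label_apply hσ, label_of_notMem_range hy, labelRel, vertexType]
  · obtain ⟨t, rfl⟩ := hy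
    simp only [label_apply hσ, label_of_notMem_range hx, labelRel, vertexType]
  · simp only [label_of_notMem_range hx, label_of_notMem_range hy, labelRel, iff_true]
    exact hcore x y hx hy

theorem homLe_of_surjective_of_label_eq {ι : Type*} {A B : FinBinRel} {σA : ι → Fin A.n}
    {σB : ι → Fin B.n} (hσA : Injective σA) (hA : IsCore A σA) (hσB : Injective σB)
    (hB : IsCore B σB) (hc : coreRel A σA = coreRel B σB) {h : Fin B.n → Fin A.n}
    (hsurj : Surjective h) (hlabel : ∀ v, label A σA (h v) = label B σB v) : HomLe A B := by
  refine ⟨h, hsurj, fun x y hxy => ?_⟩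
  rw [rel_iff_labelRel hσB hB] at hxy
  rwa [rel_iff_labelRel hσA hA, hlabel, hlabel, hc]

theorem partiallyWellOrderedOn_setOf_isCore (ι : Type*) [Finite ι] :
    {D : FinBinRel | ∃ σ : ι → Fin D.n, Injective σ ∧ IsCore D σ}.PartiallyWellOrderedOn
      HomLe := by
  rw [Set.partiallyWellOrderedOn_iff_exists_lt]
  intro f hf
  choose σ hσ hcore using hf
  -- A surjection onto a nonempty label class needs a nonempty source, so which classes are
  -- empty is part of the finite data, next to the relation on the core.
  let fiber (n : ℕ) (ℓ : CoreLabel ι) := {v // label (f n) (σ n) v = ℓ}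
  have hwqo := (Finite.wellQuasiOrdered (α := (ι → ι → Prop) × (CoreLabel ι → Prop))
    (· = ·)).prod (wellQuasiOrdered_le (α := CoreLabel ι → ℕ))
  obtain ⟨i, j, hij, hdata, hcard⟩ := hwqo fun n =>
    ((coreRel (f n) (σ n), fun ℓ => Nonempty (fiber n ℓ)), fun ℓ => Nat.card (fiber n ℓ))
  obtain ⟨hc, hne⟩ := Prod.ext_iff.mp hdata
  obtain ⟨h, hsurj, hlabel⟩ :=
    exists_fiberwise_surjective (label (f j) (σ j)) (label (f i) (σ i)) fun ℓ =>
      exists_surjective_of_card_le (hcard ℓ) (congrFun hne ℓ).mpr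
  exact ⟨i, j, hij,
    homLe_of_surjective_of_label_eq (hσ i) (hcore i) (hσ j) (hcore j) hc hsurj hlabel⟩

/-- Any class of (reflexive) digraphs with a uniform bound on the size of sets of
pairwise disjoint partial pairs is well quasi-ordered under the surjective homomorphism
ordering. (In the paper this lemma is applied within the class of reflexive digraphs.) -/
theorem stmt_17 (N : ℕ) (C : Set FinBinRel)
    (hrefl : ∀ D ∈ C, ∀ x : Fin D.n, D.rel x x)
    (hbound : ∀ D ∈ C, ∀ k, HasDisjointPartialPairs D k → k ≤ N) :
    IsWqo HomLe C := by
  have hcover : C ⊆ ⋃ k ∈ Finset.range (N + 1),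
      {D : FinBinRel | ∃ σ : Fin k ⊕ Fin k → Fin D.n, Injective σ ∧ IsCore D σ} := by
    intro D hD
    obtain ⟨k, hk, a, b, hab, hcore⟩ := exists_isCore (hrefl D hD) (hbound D hD)
    exact Set.mem_biUnion (Finset.mem_range_succ_iff.mpr hk) ⟨_, hab, hcore⟩
  have hpwo := (Set.PartiallyWellOrderedOn.biUnion fun k _ =>
    partiallyWellOrderedOn_setOf_isCore (Fin k ⊕ Fin k)).mono hcover
  exact Set.partiallyWellOrderedOn_iff_exists_lt.mp hpwo
end
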